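/- Let ρ = 3 − √8, and for 0 < x < ρ let S(x) = (1 − 3x − √(1 − 6x + x²))/(4x) and R(x) = S(x) + x(1 + S(x)). Then there exists a unique ρ_B ∈ (0, ρ) such that (1 + S(ρ_B))·R(ρ_B) = 1, and ρ_B satisfies the cubic equation 1 − 5ρ_B − 7ρ_B² + ρ_B³ = 0. -/

import Mathlib

/-!
Write `s = S(x)`. On `(0, ρ)` the function `S` is the smaller root of `2x s² + (3x - 1) s + x = 0`,
i.e. `x = s / ((2s + 1)(s + 1))`, and this parametrisation inverts `S` on `(0, 1/√2)`. In terms of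
`s` the equation `(1 + S)·R = 1` reads `2s³ + 4s² = 1`, which has exactly one positive root (it lies
in `(0, 1/2)`); eliminating `s` between the two relations gives the cubic in `x`.
-/

noncomputable def rhoN : ℝ := 3 - Real.sqrt 8

noncomputable def Sfun (x : ℝ) : ℝ :=
  (1 - 3 * x - Real.sqrt (1 - 6 * x + x ^ 2)) / (4 * x)

noncomputable def Rfun (x : ℝ) : ℝ := Sfun x + x * (1 + Sfun x)

noncomputable def Sinv (s : ℝ) : ℝ := s / ((2 * s + 1) * (s + 1))

lemma rhoN_lt_one_third : rhoN < 1 / 3 := by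
  have : (8 / 3 : ℝ) < Real.sqrt 8 := by rw [Real.lt_sqrt (by norm_num)]; norm_num
  unfold rhoN; linarith

lemma lt_rhoN_iff {x : ℝ} (hx : x < 3) : x < rhoN ↔ 0 < 1 - 6 * x + x ^ 2 := by
  have hfactor : 1 - 6 * x + x ^ 2 = (rhoN - x) * (3 + Real.sqrt 8 - x) := by
    unfold rhoN; linear_combination Real.sq_sqrt (show (0 : ℝ) ≤ 8 by norm_num)
  rw [hfactor, mul_pos_iff_of_pos_right (by linarith [Real.sqrt_nonneg 8]), sub_pos]

section Sfun

variable {x : ℝ}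

lemma disc_pos_of_mem_Ioo (hx : x ∈ Set.Ioo 0 rhoN) : 0 < 1 - 6 * x + x ^ 2 :=
  (lt_rhoN_iff (by linarith [hx.2, rhoN_lt_one_third])).1 hx.2

lemma Sfun_pos (hx : x ∈ Set.Ioo 0 rhoN) : 0 < Sfun x := by
  have hthird : x < 1 / 3 := hx.2.trans rhoN_lt_one_third
  have hsqrt_lt : Real.sqrt (1 - 6 * x + x ^ 2) < 1 - 3 * x := by
    rw [Real.sqrt_lt' (by linarith)]; nlinarith [hx.1]
  exact div_pos (by linarith) (by linarith [hx.1])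

lemma Sfun_relation (hx : x ∈ Set.Ioo 0 rhoN) :
    x * ((2 * Sfun x + 1) * (Sfun x + 1)) = Sfun x := by
  have hx0 : x ≠ 0 := hx.1.ne'
  have h4S : 1 - 3 * x - 4 * x * Sfun x = Real.sqrt (1 - 6 * x + x ^ 2) := by
    rw [Sfun]; field_simp; ring
  have hsq : (1 - 3 * x - 4 * x * Sfun x) ^ 2 = 1 - 6 * x + x ^ 2 := by
    rw [h4S, Real.sq_sqrt (disc_pos_of_mem_Ioo hx).le]
  exact mul_left_cancel₀ (by positivity : (8 : ℝ) * x ≠ 0) (by linear_combination hsq)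

lemma Sinv_Sfun (hx : x ∈ Set.Ioo 0 rhoN) : Sinv (Sfun x) = x := by
  have hpos := Sfun_pos hx
  rw [Sinv, div_eq_iff (by positivity), Sfun_relation hx]

end Sfun

section Sinv

variable {s : ℝ}

lemma one_sub_six_mul_Sinv_add_sq (hs : 0 < s) :
    1 - 6 * Sinv s + Sinv s ^ 2 = ((1 - 2 * s ^ 2) / ((2 * s + 1) * (s + 1))) ^ 2 := by
  unfold Sinv; field_simp; ring

lemma Sinv_mem_Ioo (hs : 0 < s) (hs2 : 2 * s ^ 2 < 1) : Sinv s ∈ Set.Ioo 0 rhoN := by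
  have hD : 0 < (2 * s + 1) * (s + 1) := by positivity
  have hlt_one : Sinv s < 1 := by rw [Sinv, div_lt_one hD]; nlinarith
  refine ⟨div_pos hs hD, (lt_rhoN_iff (by linarith)).2 ?_⟩
  rw [one_sub_six_mul_Sinv_add_sq hs]
  exact pow_pos (div_pos (by linarith) hD) 2

lemma Sfun_Sinv (hs : 0 < s) (hs2 : 2 * s ^ 2 < 1) : Sfun (Sinv s) = s := by
  have hD : 0 < (2 * s + 1) * (s + 1) := by positivity
  rw [Sfun, one_sub_six_mul_Sinv_add_sq hs, Real.sqrt_sq (div_nonneg (by linarith) hD.le), Sinv]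
  field_simp
  ring

end Sinv

section Relation

variable {x s : ℝ}

lemma one_add_mul_eq_one_iff (hs : 0 < s) (hrel : x * ((2 * s + 1) * (s + 1)) = s) :
    (1 + s) * (s + x * (1 + s)) = 1 ↔ 2 * s ^ 3 + 4 * s ^ 2 = 1 := by
  have key : (2 * s + 1) * ((1 + s) * (s + x * (1 + s)) - 1) = 2 * s ^ 3 + 4 * s ^ 2 - 1 := by
    linear_combination (1 + s) * hrel
  rw [← sub_eq_zero, ← mul_eq_zero_iff_left (by positivity : 2 * s + 1 ≠ 0), key, sub_eq_zero]

lemma cubic_eq_zero_of_relation (hs : 0 < s) (hrel : x * ((2 * s + 1) * (s + 1)) = s)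
    (hroot : 2 * s ^ 3 + 4 * s ^ 2 = 1) : 1 - 5 * x - 7 * x ^ 2 + x ^ 3 = 0 := by
  have hD : (2 * s ^ 2 + 3 * s + 1) ^ 3 ≠ 0 := by positivity
  refine (mul_eq_zero_iff_left hD).1 ?_
  linear_combination
    (x ^ 2 * (2 * s ^ 2 + 3 * s + 1) ^ 2 + x * (2 * s ^ 2 + 3 * s + 1) * s
      - 7 * x * (2 * s ^ 2 + 3 * s + 1) ^ 2 - 7 * (2 * s ^ 2 + 3 * s + 1) * s
      - 5 * (2 * s ^ 2 + 3 * s + 1) ^ 2 + s ^ 2) * hrel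
    + (4 * s ^ 3 - 4 * s - 1) * hroot

end Relation

lemma one_add_Sfun_mul_Rfun_eq_one_iff {x : ℝ} (hx : x ∈ Set.Ioo 0 rhoN) :
    (1 + Sfun x) * Rfun x = 1 ↔ 2 * Sfun x ^ 3 + 4 * Sfun x ^ 2 = 1 :=
  one_add_mul_eq_one_iff (Sfun_pos hx) (Sfun_relation hx)

lemma strictMonoOn_cubic : StrictMonoOn (fun s : ℝ => 2 * s ^ 3 + 4 * s ^ 2) (Set.Ici 0) := by
  intro a (ha : 0 ≤ a) b _ hab
  dsimp only
  gcongr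

lemma exists_pos_cubic_root : ∃ s : ℝ, 0 < s ∧ 2 * s ^ 2 < 1 ∧ 2 * s ^ 3 + 4 * s ^ 2 = 1 := by
  obtain ⟨s, ⟨hs0, hs1⟩, hroot⟩ := intermediate_value_Icc (by norm_num : (0 : ℝ) ≤ 1 / 2)
    (f := fun s : ℝ => 2 * s ^ 3 + 4 * s ^ 2) (by fun_prop) (by norm_num : (1 : ℝ) ∈ Set.Icc _ _)
  have hpos : 0 < s := hs0.lt_of_ne (by rintro rfl; norm_num at hroot)
  exact ⟨s, hpos, by nlinarith, hroot⟩

theorem rhoB_exists_unique_and_cubic :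
    (∃! x : ℝ, x ∈ Set.Ioo (0 : ℝ) rhoN ∧ (1 + Sfun x) * Rfun x = 1) ∧
    (∀ x : ℝ, x ∈ Set.Ioo (0 : ℝ) rhoN → (1 + Sfun x) * Rfun x = 1 →
      1 - 5 * x - 7 * x ^ 2 + x ^ 3 = 0) := by
  obtain ⟨s, hs, hs2, hroot⟩ := exists_pos_cubic_root
  have hmem := Sinv_mem_Ioo hs hs2
  have hsolves : (1 + Sfun (Sinv s)) * Rfun (Sinv s) = 1 := by
    rwa [one_add_Sfun_mul_Rfun_eq_one_iff hmem, Sfun_Sinv hs hs2]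
  refine ⟨⟨Sinv s, ⟨hmem, hsolves⟩, ?_⟩, fun x hx h => ?_⟩
  · rintro x ⟨hx, h⟩
    have hSx : Sfun x = s := strictMonoOn_cubic.injOn (Sfun_pos hx).le hs.le
      (((one_add_Sfun_mul_Rfun_eq_one_iff hx).1 h).trans hroot.symm)
    rw [← Sinv_Sfun hx, hSx]
  · exact cubic_eq_zero_of_relation (Sfun_pos hx) (Sfun_relation hx)
      ((one_add_Sfun_mul_Rfun_eq_one_iff hx).1 h)
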